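/- Under the average-case value-error assumption (E_{π⋆}[V̂/V⋆] ≤ κ and E_{π⋆}[V⋆/V̂] ≤ κ at every level h), the extension μ⋆ of π⋆ to the autoregressive tree (placing all mass on leaves) satisfies 1 + χ²(μ⋆ ‖ μ) ≤ 2Hκ², where μ is the stationary distribution of the VGB random walk. -/

import Mathlib

open Finset
open scoped Classical

/-- A node of the autoregressive tree over alphabet `A` with depth `H`. -/
abbrev TreeNode (H : ℕ) (A : Type*) := Σ h : Fin (H + 1), (Fin (h : ℕ) → A)

/-- `p` is the parent of `c` in the autoregressive tree. -/
def IsParent {H : ℕ} {A : Type*} (p c : TreeNode H A) : Prop :=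
  ∃ hc : (c.1 : ℕ) = (p.1 : ℕ) + 1,
    ∀ i : Fin (p.1 : ℕ), p.2 i = c.2 (Fin.castLE (by omega) i)

/-- The marginal probability `μ(y_{1:h})` of the prefix given by node `v` under a
distribution `μ` on full sequences. -/
noncomputable def nodeMarg {H : ℕ} {A : Type*} [Fintype A]
    (μ : (Fin H → A) → ℝ) (v : TreeNode H A) : ℝ :=
  ∑ z : Fin H → A,
    if ∀ i : Fin (v.1 : ℕ), z (Fin.castLE (Nat.lt_succ_iff.mp v.1.isLt) i) = v.2 i
    then μ z else 0

/-- The unnormalized value `∑_{extensions} π_ref·τ` at node `v`. -/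
noncomputable def nodeVnum {H : ℕ} {A : Type*} [Fintype A]
    (πref τ : (Fin H → A) → ℝ) (v : TreeNode H A) : ℝ :=
  ∑ z : Fin H → A,
    if ∀ i : Fin (v.1 : ℕ), z (Fin.castLE (Nat.lt_succ_iff.mp v.1.isLt) i) = v.2 i
    then πref z * τ z else 0

/-- The true value function `V⋆(y_{1:h}) = E_{π_ref}[τ | y_{1:h}]` at node `v`. -/
noncomputable def nodeVstar {H : ℕ} {A : Type*} [Fintype A]
    (πref τ : (Fin H → A) → ℝ) (v : TreeNode H A) : ℝ :=
  nodeVnum πref τ v / nodeMarg πref v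

/-- The total edge weight incident to node `v`, for the VGB edge weights
`f(y_{1:h−1}, y_{1:h}) = π_ref(y_{1:h})·V̂(y_{1:h})`. -/
noncomputable def nodeS {H : ℕ} {A : Type*} [Fintype A]
    (πref : (Fin H → A) → ℝ) (Vhat : TreeNode H A → ℝ) (v : TreeNode H A) : ℝ :=
  (if (v.1 : ℕ) = 0 then 0 else nodeMarg πref v * Vhat v) +
    ∑ u : TreeNode H A, if IsParent v u then nodeMarg πref u * Vhat u else 0

/-- The stationary distribution `μ(v) ∝ ∑_{w ~ v} f(v,w)` of the VGB random walk. -/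
noncomputable def nodeMu {H : ℕ} {A : Type*} [Fintype A]
    (πref : (Fin H → A) → ℝ) (Vhat : TreeNode H A → ℝ) (v : TreeNode H A) : ℝ :=
  nodeS πref Vhat v / ∑ u : TreeNode H A, nodeS πref Vhat u

/-- The extension `μ⋆` of `π⋆` to the tree: all mass on the leaves. -/
noncomputable def nodeMuStar {H : ℕ} {A : Type*} [Fintype A]
    (πstar : (Fin H → A) → ℝ) (v : TreeNode H A) : ℝ :=
  if hv : (v.1 : ℕ) = H then πstar (fun i : Fin H => v.2 (Fin.cast hv.symm i)) else 0


section Helpers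
set_option linter.unusedSectionVars false
variable {H : ℕ} {A : Type*} [Fintype A]

lemma leaf_sum (g : (Fin H → A) → ℝ) (v : TreeNode H A) (hv : (v.1 : ℕ) = H) :
    (∑ z : Fin H → A,
      if ∀ i : Fin (v.1 : ℕ), z (Fin.castLE (Nat.lt_succ_iff.mp v.1.isLt) i) = v.2 i
      then g z else 0) = g (fun i : Fin H => v.2 (Fin.cast hv.symm i)) := by
  rw [Finset.sum_eq_single (fun i : Fin H => v.2 (Fin.cast hv.symm i))]
  · rw [if_pos]
    intro i
    exact congrArg v.2 (Fin.ext rfl)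
  · intro z _ hz
    rw [if_neg]
    intro hcond
    apply hz
    funext j
    have h := hcond (Fin.cast hv.symm j)
    rw [show Fin.castLE (Nat.lt_succ_iff.mp v.1.isLt) (Fin.cast hv.symm j) = j from Fin.ext rfl] at h
    exact h
  · intro h; exact absurd (Finset.mem_univ _) h

lemma nodeMarg_leaf (μ : (Fin H → A) → ℝ) (v : TreeNode H A) (hv : (v.1 : ℕ) = H) :
    nodeMarg μ v = μ (fun i : Fin H => v.2 (Fin.cast hv.symm i)) :=
  leaf_sum μ v hv

lemma nodeVnum_leaf (πref τ : (Fin H → A) → ℝ) (v : TreeNode H A) (hv : (v.1 : ℕ) = H) :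
    nodeVnum πref τ v = πref (fun i : Fin H => v.2 (Fin.cast hv.symm i))
      * τ (fun i : Fin H => v.2 (Fin.cast hv.symm i)) :=
  leaf_sum (fun z => πref z * τ z) v hv

lemma nodeMarg_nonneg (μ : (Fin H → A) → ℝ) (hμ : ∀ z, 0 ≤ μ z) (v : TreeNode H A) :
    0 ≤ nodeMarg μ v :=
  Finset.sum_nonneg fun z _ => by split; exacts [hμ z, le_rfl]

lemma nodeVnum_eq_zero (πref τ : (Fin H → A) → ℝ) (hπ : ∀ z, 0 ≤ πref z)
    (v : TreeNode H A) (hm : nodeMarg πref v = 0) : nodeVnum πref τ v = 0 := by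
  unfold nodeMarg at hm
  have h := (Finset.sum_eq_zero_iff_of_nonneg
    (fun z _ => by split; exacts [hπ z, le_rfl])).mp hm
  apply Finset.sum_eq_zero
  intro z _
  split
  · rename_i hc
    have h2 := h z (Finset.mem_univ z)
    rw [if_pos hc] at h2
    rw [h2, zero_mul]
  · rfl

def parNode (u : TreeNode H A) : TreeNode H A :=
  ⟨⟨(u.1 : ℕ) - 1, by have := u.1.isLt; omega⟩,
    fun i => u.2 ⟨i.1, by have h := i.isLt; simp only [Fin.val_mk] at h; omega⟩⟩

lemma isParent_iff (u : TreeNode H A) (hu : (u.1 : ℕ) ≠ 0) (v : TreeNode H A) :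
    IsParent v u ↔ v = parNode u := by
  constructor
  · rintro ⟨hc, hrest⟩
    have h1 : v.1 = (parNode u).1 := Fin.ext (by simp only [parNode]; omega)
    refine Sigma.ext h1 ?_
    rw [Fin.heq_fun_iff (show (v.1 : ℕ) = ((parNode u).1 : ℕ) by rw [h1])]
    intro i
    rw [hrest i]
    rfl
  · rintro rfl
    refine ⟨by simp only [parNode]; omega, fun i => rfl⟩

lemma sum_isParent (u : TreeNode H A) (w : ℝ) :
    (∑ v : TreeNode H A, if IsParent v u then w else 0)
      = if (u.1 : ℕ) = 0 then 0 else w := by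
  by_cases hu : (u.1 : ℕ) = 0
  · rw [if_pos hu]
    apply Finset.sum_eq_zero
    intro v _
    rw [if_neg]
    rintro ⟨hc, -⟩
    omega
  · rw [if_neg hu]
    simp only [isParent_iff u hu]
    simp

lemma nodeS_leaf (πref : (Fin H → A) → ℝ) (Vhat : TreeNode H A → ℝ)
    (v : TreeNode H A) (hH : 1 ≤ H) (hv : (v.1 : ℕ) = H) :
    nodeS πref Vhat v = πref (fun i : Fin H => v.2 (Fin.cast hv.symm i)) * Vhat v := by
  unfold nodeS
  rw [if_neg (by omega), nodeMarg_leaf πref v hv]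
  have hz : ∀ u : TreeNode H A, ¬ IsParent v u := by
    rintro u ⟨hc, -⟩
    have := u.1.isLt
    omega
  rw [Finset.sum_eq_zero (fun u _ => if_neg (hz u)), add_zero]

lemma sum_nodeS (πref : (Fin H → A) → ℝ) (Vhat : TreeNode H A → ℝ) :
    ∑ u : TreeNode H A, nodeS πref Vhat u
      = 2 * ∑ u : TreeNode H A,
          (if (u.1 : ℕ) = 0 then 0 else nodeMarg πref u * Vhat u) := by
  unfold nodeS
  rw [Finset.sum_add_distrib, Finset.sum_comm]
  rw [Finset.sum_congr rfl (fun u _ => sum_isParent u (nodeMarg πref u * Vhat u))]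
  ring

lemma sum_levels (w : TreeNode H A → ℝ) :
    ∑ u : TreeNode H A, (if (u.1 : ℕ) = 0 then 0 else w u)
      = ∑ h ∈ Finset.Icc 1 H, ∑ u : TreeNode H A, (if (u.1 : ℕ) = h then w u else 0) := by
  rw [Finset.sum_comm]
  refine Finset.sum_congr rfl fun u _ => ?_
  rw [Finset.sum_ite_eq (Finset.Icc 1 H) ((u.1 : ℕ)) (fun _ => w u)]
  have hlt := u.1.isLt
  by_cases h0 : (u.1 : ℕ) = 0
  · rw [if_pos h0, if_neg (by simp [Finset.mem_Icc]; omega)]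
  · rw [if_neg h0, if_pos (by simp [Finset.mem_Icc]; omega)]

end Helpers

/-- **χ² bound between π⋆ and the VGB stationary distribution.** Under the
average-case value error assumption (`E_{π⋆}[V̂/V⋆] ≤ κ` and `E_{π⋆}[V⋆/V̂] ≤ κ` at
every level `h ∈ [H]`), the extension `μ⋆` of `π⋆` to the autoregressive tree
satisfies `1 + χ²(μ⋆ ‖ μ) ≤ 2Hκ²`, where `μ` is the stationary distribution of the
VGB random walk; i.e. `∑_v μ(v)·(μ⋆(v)/μ(v))² ≤ 2Hκ²`. -/
theorem vgb_chisq_bound {H : ℕ} {A : Type*} [Fintype A]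
    (hH : 1 ≤ H) (κ : ℝ) (hκ : 1 ≤ κ)
    (πref τ : (Fin H → A) → ℝ)
    (hπ : ∀ z, 0 ≤ πref z) (hπ1 : ∑ z, πref z = 1)
    (hτ : ∀ z, 0 ≤ τ z) (hτpos : 0 < ∑ z, πref z * τ z)
    (πstar : (Fin H → A) → ℝ)
    (hπstar : ∀ z, πstar z = πref z * τ z / ∑ z', πref z' * τ z')
    (Vhat : TreeNode H A → ℝ)
    (hVhatNonneg : ∀ v, 0 ≤ Vhat v)
    (hVhatPos : ∀ v : TreeNode H A, 1 ≤ (v.1 : ℕ) →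
      0 < nodeMarg πstar v → 0 < Vhat v)
    (hVhatVanish : ∀ v : TreeNode H A, 1 ≤ (v.1 : ℕ) →
      nodeVstar πref τ v = 0 → Vhat v = 0)
    (havg : ∀ h : ℕ, 1 ≤ h → h ≤ H →
      (∑ v : TreeNode H A,
          if (v.1 : ℕ) = h then nodeMarg πstar v * (Vhat v / nodeVstar πref τ v)
          else 0) ≤ κ ∧
      (∑ v : TreeNode H A,
          if (v.1 : ℕ) = h then nodeMarg πstar v * (nodeVstar πref τ v / Vhat v)
          else 0) ≤ κ) :
    ∑ v : TreeNode H A,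
        nodeMu πref Vhat v * (nodeMuStar πstar v / nodeMu πref Vhat v) ^ 2
      ≤ 2 * H * κ ^ 2 := by
  have hZτpos : 0 < ∑ z, πref z * τ z := hτpos
  set Zτ := ∑ z, πref z * τ z with hZτdef
  have hmargstar : ∀ v : TreeNode H A,
      nodeMarg πstar v = nodeVnum πref τ v / Zτ := by
    intro v
    unfold nodeMarg nodeVnum
    rw [Finset.sum_div]
    refine Finset.sum_congr rfl fun z _ => ?_
    split
    · exact hπstar z
    · exact (zero_div _).symm
  have hSnn : ∀ v : TreeNode H A, 0 ≤ nodeS πref Vhat v := by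
    intro v
    unfold nodeS
    refine add_nonneg ?_ (Finset.sum_nonneg fun u _ => ?_)
    · split
      · exact le_rfl
      · exact mul_nonneg (nodeMarg_nonneg πref hπ v) (hVhatNonneg v)
    · split
      · exact mul_nonneg (nodeMarg_nonneg πref hπ u) (hVhatNonneg u)
      · exact le_rfl
  set Z := ∑ u : TreeNode H A, nodeS πref Vhat u with hZdef
  have hZnn : 0 ≤ Z := Finset.sum_nonneg fun v _ => hSnn v
  -- level bound
  have hlevel : ∀ h : ℕ, 1 ≤ h → h ≤ H →
      (∑ u : TreeNode H A, if (u.1 : ℕ) = h then nodeMarg πref u * Vhat u else 0)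
        ≤ κ * Zτ := by
    intro h h1 hhH
    have hb := (havg h h1 hhH).1
    calc (∑ u : TreeNode H A, if (u.1 : ℕ) = h then nodeMarg πref u * Vhat u else 0)
        ≤ ∑ u : TreeNode H A, (if (u.1 : ℕ) = h then
            Zτ * (nodeMarg πstar u * (Vhat u / nodeVstar πref τ u)) else 0) := by
          refine Finset.sum_le_sum fun u _ => ?_
          split
          · rename_i hu
            by_cases hn : nodeVnum πref τ u = 0
            · have hVs : nodeVstar πref τ u = 0 := by
                unfold nodeVstar; rw [hn, zero_div]
              have hVh : Vhat u = 0 := hVhatVanish u (by omega) hVs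
              rw [hVh, mul_zero]
              have : 0 ≤ nodeMarg πstar u * (0 / nodeVstar πref τ u) := by
                rw [zero_div, mul_zero]
              nlinarith [this, hZτpos]
            · have hm : nodeMarg πref u ≠ 0 :=
                fun h0 => hn (nodeVnum_eq_zero πref τ hπ u h0)
              rw [hmargstar u]
              apply le_of_eq
              unfold nodeVstar
              field_simp
          · exact le_rfl
      _ = Zτ * (∑ u : TreeNode H A, if (u.1 : ℕ) = h then
            nodeMarg πstar u * (Vhat u / nodeVstar πref τ u) else 0) := by
          rw [Finset.mul_sum]
          refine Finset.sum_congr rfl fun u _ => ?_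
          split
          · rfl
          · rw [mul_zero]
      _ ≤ Zτ * κ := mul_le_mul_of_nonneg_left hb hZτpos.le
      _ = κ * Zτ := mul_comm _ _
  have hZle : Z ≤ 2 * H * (κ * Zτ) := by
    rw [hZdef, sum_nodeS, sum_levels]
    have hsum : (∑ h ∈ Finset.Icc 1 H, ∑ u : TreeNode H A,
        (if (u.1 : ℕ) = h then nodeMarg πref u * Vhat u else 0))
        ≤ ∑ _h ∈ Finset.Icc 1 H, κ * Zτ :=
      Finset.sum_le_sum fun h hh =>
        hlevel h (Finset.mem_Icc.mp hh).1 (Finset.mem_Icc.mp hh).2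
    rw [Finset.sum_const, Nat.card_Icc, nsmul_eq_mul] at hsum
    have : ((H + 1 - 1 : ℕ) : ℝ) = (H : ℝ) := by norm_num
    rw [this] at hsum
    nlinarith [hsum]
  -- pointwise leaf bound
  have hmain : ∀ v : TreeNode H A,
      nodeMu πref Vhat v * (nodeMuStar πstar v / nodeMu πref Vhat v) ^ 2
        ≤ (if (v.1 : ℕ) = H then
            (Z / Zτ) * (nodeMarg πstar v * (nodeVstar πref τ v / Vhat v)) else 0) := by
    intro v
    by_cases hv : (v.1 : ℕ) = H
    · rw [if_pos hv]
      have hstar : nodeMuStar πstar v = πstar (fun i : Fin H => v.2 (Fin.cast hv.symm i)) :=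
        dif_pos hv
      set z : Fin H → A := fun i : Fin H => v.2 (Fin.cast hv.symm i) with hzdef
      have hms : nodeMarg πstar v = πstar z := nodeMarg_leaf πstar v hv
      by_cases hp : πstar z = 0
      · rw [hstar, hp, hms, hp, zero_div, zero_pow (by norm_num), mul_zero, zero_mul,
          mul_zero]
      · have hpnn : 0 ≤ πstar z := by
          rw [hπstar]
          exact div_nonneg (mul_nonneg (hπ z) (hτ z)) hZτpos.le
        have hppos : 0 < πstar z := lt_of_le_of_ne hpnn (Ne.symm hp)
        have hπτ : 0 < πref z * τ z := by
          have h1 : 0 < πref z * τ z / Zτ := by rw [← hπstar z]; exact hppos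
          have h2 := mul_pos h1 hZτpos
          rwa [div_mul_cancel₀ _ hZτpos.ne'] at h2
        have hπz : 0 < πref z := by
          rcases lt_or_eq_of_le (hπ z) with h | h
          · exact h
          · rw [← h, zero_mul] at hπτ; exact absurd hπτ (lt_irrefl 0)
        have hτz : 0 < τ z := by
          rcases lt_or_eq_of_le (hτ z) with h | h
          · exact h
          · rw [← h, mul_zero] at hπτ; exact absurd hπτ (lt_irrefl 0)
        have hVh : 0 < Vhat v := hVhatPos v (by omega) (by rw [hms]; exact hppos)
        have hmr : nodeMarg πref v = πref z := nodeMarg_leaf πref v hv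
        have hS : nodeS πref Vhat v = πref z * Vhat v := nodeS_leaf πref Vhat v hH hv
        have hSpos : 0 < nodeS πref Vhat v := by rw [hS]; exact mul_pos hπz hVh
        have hZpos : 0 < Z :=
          lt_of_lt_of_le hSpos
            (Finset.single_le_sum (fun u _ => hSnn u) (Finset.mem_univ v))
        have hVs : nodeVstar πref τ v = τ z := by
          unfold nodeVstar
          rw [nodeVnum_leaf πref τ v hv, hmr, ← hzdef]
          rw [mul_comm, mul_div_assoc, div_self hπz.ne', mul_one]
        apply le_of_eq
        unfold nodeMu
        rw [← hZdef, hS, hstar, hms, hVs, hπstar z]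
        field_simp
    · rw [if_neg hv]
      have h0 : nodeMuStar πstar v = 0 := dif_neg hv
      rw [h0, zero_div, zero_pow (by norm_num), mul_zero]
  have hleaf := (havg H hH le_rfl).2
  have hκ0 : (0:ℝ) ≤ κ := le_trans zero_le_one hκ
  calc ∑ v : TreeNode H A,
        nodeMu πref Vhat v * (nodeMuStar πstar v / nodeMu πref Vhat v) ^ 2
      ≤ ∑ v : TreeNode H A, (if (v.1 : ℕ) = H then
          (Z / Zτ) * (nodeMarg πstar v * (nodeVstar πref τ v / Vhat v)) else 0) :=
        Finset.sum_le_sum fun v _ => hmain v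
    _ = (Z / Zτ) * (∑ v : TreeNode H A, if (v.1 : ℕ) = H then
          nodeMarg πstar v * (nodeVstar πref τ v / Vhat v) else 0) := by
        rw [Finset.mul_sum]
        refine Finset.sum_congr rfl fun v _ => ?_
        split
        · rfl
        · rw [mul_zero]
    _ ≤ (Z / Zτ) * κ :=
        mul_le_mul_of_nonneg_left hleaf (div_nonneg hZnn hZτpos.le)
    _ ≤ (2 * H * κ) * κ := by
        refine mul_le_mul_of_nonneg_right ?_ hκ0
        rw [div_le_iff₀ hZτpos]
        nlinarith [hZle]
    _ = 2 * H * κ ^ 2 := by ring
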